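/- Let b(x) = √|x| on ℝ. Define X : [0,∞) × ℝ → ℝ by: for x < 0, X(t,x) = −(√(−x) − t/2)² if t ≤ 2√(−x) and X(t,x) = (t/2 − √(−x))² if t > 2√(−x); and for x ≥ 0, X(t,x) = (t/2 + √x)². Define Y : [0,∞) × ℝ → ℝ in the same way except that Y(t,x) = 0 for all t ≥ 2√(−x) when x < 0. Then: (i) for every x, both t ↦ X(t,x) and t ↦ Y(t,x) are continuously differentiable on [0,∞) and solve ∂_t Z(t,x) = √|Z(t,x)| with Z(0,x) = x; (ii) there exists a continuous function φ : [0,∞) → [0,∞) with φ(ξ) > 0 for ξ > 0 such that |X(t,I)| ≥ φ(|I|) for every bounded interval I ⊂ ℝ and every t ∈ [0,1] (weak compressibility); (iii) Y fails weak compressibility on [0,1]: |Y(2√ε, [−ε, 0])| = 0 for every 0 < ε ≤ 1/4, so no function φ with φ(ξ) > 0 for ξ > 0 can satisfy |Y(t,I)| ≥ φ(|I|) for all bounded intervals I and all t ∈ [0,1]. -/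

import Mathlib

open MeasureTheory Set
open scoped Classical

/-- The flow selection of `ẋ = √|x|` that leaves the origin immediately. -/
noncomputable def Xex (t x : ℝ) : ℝ :=
  if x < 0 then
    (if t ≤ 2 * Real.sqrt (-x) then -(Real.sqrt (-x) - t / 2) ^ 2
      else (t / 2 - Real.sqrt (-x)) ^ 2)
  else (t / 2 + Real.sqrt x) ^ 2

/-- The solution of `ẋ = √|x|` that sticks at the origin forever. -/
noncomputable def Yex (t x : ℝ) : ℝ :=
  if x < 0 then
    (if t ≤ 2 * Real.sqrt (-x) then -(Real.sqrt (-x) - t / 2) ^ 2 else 0)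
  else (t / 2 + Real.sqrt x) ^ 2

/-!
With the signed square `G y = y |y|` one has `G' = 2 √|G|`, so `t ↦ G (t / 2 + G⁻¹ x)` solves
`ż = √|z|`, `z(0) = x`: this is `X(t, x)` for `t ≥ 0`, and `Y(t, x) = G (min (t / 2 + G⁻¹ x) 0)`
for `x < 0` is the same flow stopped at the origin, differentiable because
`G (min z 0) = (G z - z²) / 2`.

`X(t, ·)` is continuous and increasing, so `|X(t, [a, c])| = G (β + t/2) - G (α + t/2)` where
`α = G⁻¹ a`, `β = G⁻¹ c`; an elementary estimate on `G` bounds this below by `min (ξ/2) (ξ²/8)`,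
`ξ = c - a`. In contrast `Y(2√ε, ·)` maps `[-ε, 0]` into the two points `0` and `Y(2√ε, 0)`.
-/

noncomputable def signedSq (y : ℝ) : ℝ := y * |y|

noncomputable def signedSqrt (x : ℝ) : ℝ := √x⁺ - √x⁻

theorem signedSq_of_nonneg {y : ℝ} (hy : 0 ≤ y) : signedSq y = y ^ 2 := by
  rw [signedSq, abs_of_nonneg hy, sq]

theorem signedSq_of_nonpos {y : ℝ} (hy : y ≤ 0) : signedSq y = -y ^ 2 := by
  rw [signedSq, abs_of_nonpos hy, sq, mul_neg]

theorem signedSqrt_of_nonneg {x : ℝ} (hx : 0 ≤ x) : signedSqrt x = √x := by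
  rw [signedSqrt, posPart_of_nonneg hx, negPart_of_nonneg hx, Real.sqrt_zero, sub_zero]

theorem signedSqrt_of_nonpos {x : ℝ} (hx : x ≤ 0) : signedSqrt x = -√(-x) := by
  rw [signedSqrt, posPart_of_nonpos hx, negPart_of_nonpos hx, Real.sqrt_zero, zero_sub]

theorem signedSq_signedSqrt (x : ℝ) : signedSq (signedSqrt x) = x := by
  rcases le_total 0 x with hx | hx
  · rw [signedSqrt_of_nonneg hx, signedSq_of_nonneg (Real.sqrt_nonneg x), Real.sq_sqrt hx]
  · rw [signedSqrt_of_nonpos hx, signedSq_of_nonpos (neg_nonpos.2 (Real.sqrt_nonneg _)),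
      neg_sq, Real.sq_sqrt (neg_nonneg.2 hx), neg_neg]

theorem sqrt_abs_signedSq (y : ℝ) : √|signedSq y| = |y| := by
  rw [signedSq, abs_mul, abs_abs, Real.sqrt_mul_self (abs_nonneg y)]

theorem monotone_signedSq : Monotone signedSq := by
  intro a b hab
  rcases le_total 0 a with ha | ha <;> rcases le_total 0 b with hb | hb <;>
    simp only [signedSq_of_nonneg, signedSq_of_nonpos, *] <;> nlinarith

theorem monotone_signedSqrt : Monotone signedSqrt := fun _ _ hab =>
  sub_le_sub (Real.sqrt_le_sqrt (posPart_mono hab)) (Real.sqrt_le_sqrt (negPart_anti hab))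

theorem continuous_signedSq : Continuous signedSq := continuous_id.mul continuous_abs

theorem continuous_signedSqrt : Continuous signedSqrt :=
  (continuous_posPart.sqrt).sub continuous_negPart.sqrt

theorem hasDerivAt_signedSq (y : ℝ) : HasDerivAt signedSq (2 * |y|) y := by
  have hsq : ∀ z : ℝ, HasDerivAt (fun w => w ^ 2) (2 * z) z := fun z => by
    simpa using hasDerivAt_pow 2 z
  rcases lt_trichotomy y 0 with hy | rfl | hy
  · refine ((hsq y).neg.congr_deriv (by rw [abs_of_neg hy]; ring)).congr_of_eventuallyEq ?_
    exact (eventually_lt_nhds hy).mono fun z hz => signedSq_of_nonpos hz.le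
  · have hleft : HasDerivWithinAt signedSq (2 * |0|) (Iic 0) 0 :=
      ((hsq 0).neg.hasDerivWithinAt.congr (fun z hz => signedSq_of_nonpos hz)
        (signedSq_of_nonpos le_rfl)).congr_deriv (by simp)
    have hright : HasDerivWithinAt signedSq (2 * |0|) (Ici 0) 0 :=
      ((hsq 0).hasDerivWithinAt.congr (fun z hz => signedSq_of_nonneg hz)
        (signedSq_of_nonneg le_rfl)).congr_deriv (by simp)
    simpa only [Iic_union_Ici, hasDerivWithinAt_univ] using hleft.union hright
  · refine ((hsq y).congr_deriv (by rw [abs_of_pos hy])).congr_of_eventuallyEq ?_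
    exact (eventually_gt_nhds hy).mono fun z hz => signedSq_of_nonneg hz.le

theorem signedSq_min_zero (z : ℝ) : signedSq (min z 0) = (signedSq z - z ^ 2) / 2 := by
  rcases le_total z 0 with hz | hz
  · rw [min_eq_left hz, signedSq_of_nonpos hz]; ring
  · rw [min_eq_right hz, signedSq_of_nonneg hz, signedSq_of_nonneg le_rfl]; ring

theorem hasDerivAt_signedSq_min_zero (y : ℝ) :
    HasDerivAt (fun z => signedSq (min z 0)) (2 * |min y 0|) y := by
  have h := ((hasDerivAt_signedSq y).fun_sub (hasDerivAt_pow 2 y)).div_const 2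
  rw [funext signedSq_min_zero]
  refine h.congr_deriv ?_
  rcases le_total y 0 with hy | hy
  · rw [min_eq_left hy, abs_of_nonpos hy]; norm_num; ring
  · rw [min_eq_right hy, abs_of_nonneg hy]; norm_num

theorem HasDerivAt.comp_half_add {g : ℝ → ℝ} {g' t : ℝ} (w : ℝ)
    (hg : HasDerivAt g g' (t / 2 + w)) : HasDerivAt (fun s => g (s / 2 + w)) (g' / 2) t :=
  (hg.comp t (((hasDerivAt_id t).div_const 2).add_const w)).congr_deriv (by ring)

theorem sq_div_two_le_signedSq_sub {a b : ℝ} (hab : a ≤ b) :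
    (b - a) ^ 2 / 2 ≤ signedSq b - signedSq a := by
  rcases le_total 0 a with ha | ha <;> rcases le_total 0 b with hb | hb <;>
    simp only [signedSq_of_nonneg, signedSq_of_nonpos, *] <;>
    nlinarith [sq_nonneg (a + b), sq_nonneg (a - b)]

theorem signedSq_sub_sub_le_signedSq_add_sub {a b s : ℝ} (hab : a ≤ b) (hs : 0 ≤ s) :
    signedSq b - signedSq a - 2 * s * (b - a) ≤ signedSq (b + s) - signedSq (a + s) := by
  rcases le_total 0 a with ha | ha <;> rcases le_total 0 b with hb | hb <;>
    rcases le_total 0 (a + s) with has | has <;> rcases le_total 0 (b + s) with hbs | hbs <;>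
    simp only [signedSq_of_nonneg, signedSq_of_nonpos, *] <;> nlinarith

/- With `ξ = G b - G a`: if `b - a ≤ ξ / 2`, the shift by `s ≤ 1/2` loses at most
`2 s (b - a) ≤ ξ / 2`; otherwise `[a + s, b + s]` is long and `(b - a)² / 2 ≥ ξ² / 8`. -/
theorem min_le_signedSq_add_sub_signedSq_add {a b s : ℝ} (hab : a ≤ b) (hs₀ : 0 ≤ s)
    (hs : s ≤ 1 / 2) :
    min ((signedSq b - signedSq a) / 2) ((signedSq b - signedSq a) ^ 2 / 8) ≤
      signedSq (b + s) - signedSq (a + s) := by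
  have hshift := signedSq_sub_sub_le_signedSq_add_sub hab hs₀
  have hgap := sq_div_two_le_signedSq_sub (a := a + s) (b := b + s) (by linarith)
  rw [add_sub_add_right_eq_sub] at hgap
  rcases le_or_gt (b - a) ((signedSq b - signedSq a) / 2) with h | h
  · exact (min_le_left _ _).trans (by nlinarith)
  · exact (min_le_right _ _).trans (by nlinarith [monotone_signedSq hab])

theorem Xex_eq_signedSq {t : ℝ} (ht : 0 ≤ t) (x : ℝ) :
    Xex t x = signedSq (t / 2 + signedSqrt x) := by
  unfold Xex
  split_ifs with hx hxt
  · rw [signedSqrt_of_nonpos hx.le, signedSq_of_nonpos (by linarith)]; ring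
  · rw [signedSqrt_of_nonpos hx.le, signedSq_of_nonneg (by linarith)]; ring
  · rw [signedSqrt_of_nonneg (not_lt.1 hx), signedSq_of_nonneg (by positivity)]

theorem Yex_of_neg {x : ℝ} (hx : x < 0) (t : ℝ) :
    Yex t x = signedSq (min (t / 2 + signedSqrt x) 0) := by
  rw [Yex, if_pos hx, signedSqrt_of_nonpos hx.le]
  split_ifs with hxt
  · rw [min_eq_left (by linarith), signedSq_of_nonpos (by linarith)]; ring
  · rw [min_eq_right (by linarith), signedSq_of_nonneg le_rfl]; ring

theorem Yex_of_nonneg {x : ℝ} (hx : 0 ≤ x) (t : ℝ) : Yex t x = Xex t x := by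
  rw [Yex, Xex, if_neg hx.not_gt, if_neg hx.not_gt]

theorem Xex_zero (x : ℝ) : Xex 0 x = x := by
  rw [Xex_eq_signedSq le_rfl, zero_div, zero_add, signedSq_signedSqrt]

theorem Yex_zero (x : ℝ) : Yex 0 x = x := by
  rcases lt_or_ge x 0 with hx | hx
  · have : signedSqrt x ≤ 0 := by simpa [signedSqrt_of_nonneg] using monotone_signedSqrt hx.le
    rw [Yex_of_neg hx, zero_div, zero_add, min_eq_left this, signedSq_signedSqrt]
  · rw [Yex_of_nonneg hx, Xex_zero]

theorem hasDerivWithinAt_Xex (x : ℝ) {t : ℝ} (ht : 0 ≤ t) :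
    HasDerivWithinAt (fun s => Xex s x) (√|Xex t x|) (Ici 0) t := by
  rw [Xex_eq_signedSq ht, sqrt_abs_signedSq]
  refine (((hasDerivAt_signedSq _).comp_half_add _).congr_deriv ?_).hasDerivWithinAt.congr
    (fun s hs => Xex_eq_signedSq hs x) (Xex_eq_signedSq ht x)
  ring

theorem hasDerivWithinAt_Yex (x : ℝ) {t : ℝ} (ht : 0 ≤ t) :
    HasDerivWithinAt (fun s => Yex s x) (√|Yex t x|) (Ici 0) t := by
  rcases lt_or_ge x 0 with hx | hx
  · simp only [Yex_of_neg hx, sqrt_abs_signedSq]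
    refine (((hasDerivAt_signedSq_min_zero _).comp_half_add _).congr_deriv ?_).hasDerivWithinAt
    ring
  · simpa only [Yex_of_nonneg hx] using hasDerivWithinAt_Xex x ht

def IsWeakCompressibilityModulus (Z : ℝ → ℝ → ℝ) (φ : ℝ → ℝ) : Prop :=
  ContinuousOn φ (Ici 0) ∧ (∀ ξ > (0 : ℝ), 0 < φ ξ) ∧
    ∀ a c : ℝ, a ≤ c → ∀ t ∈ Icc (0 : ℝ) 1, φ (c - a) ≤ (volume (Z t '' Icc a c)).toReal

theorem monotone_Xex {t : ℝ} (ht : 0 ≤ t) : Monotone (Xex t) := fun a b hab => by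
  rw [Xex_eq_signedSq ht, Xex_eq_signedSq ht]
  exact monotone_signedSq ((add_le_add_iff_left _).2 (monotone_signedSqrt hab))

theorem continuous_Xex {t : ℝ} (ht : 0 ≤ t) : Continuous (Xex t) := by
  rw [funext (Xex_eq_signedSq ht)]
  exact continuous_signedSq.comp (continuous_const.add continuous_signedSqrt)

theorem volume_Xex_image_Icc {t a c : ℝ} (ht : 0 ≤ t) (hac : a ≤ c) :
    (volume (Xex t '' Icc a c)).toReal = Xex t c - Xex t a := by
  rw [(continuous_Xex ht).continuousOn.image_Icc_of_monotoneOn hac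
      ((monotone_Xex ht).monotoneOn _), Real.volume_Icc,
    ENNReal.toReal_ofReal (sub_nonneg.2 (monotone_Xex ht hac))]

theorem isWeakCompressibilityModulus_Xex :
    IsWeakCompressibilityModulus Xex fun ξ => min (ξ / 2) (ξ ^ 2 / 8) := by
  refine ⟨by fun_prop, fun ξ hξ => by positivity, fun a c hac t ht => ?_⟩
  have h := min_le_signedSq_add_sub_signedSq_add (s := t / 2) (monotone_signedSqrt hac)
    (by linarith [ht.1]) (by linarith [ht.2])
  rwa [signedSq_signedSqrt, signedSq_signedSqrt, add_comm (signedSqrt c), add_comm (signedSqrt a),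
    ← Xex_eq_signedSq ht.1, ← Xex_eq_signedSq ht.1, ← volume_Xex_image_Icc ht.1 hac] at h

theorem Yex_eq_zero {t x : ℝ} (hx : x < 0) (hxt : 2 * √(-x) ≤ t) : Yex t x = 0 := by
  rw [Yex, if_pos hx]
  split_ifs with h
  · rw [show t = 2 * √(-x) by linarith]; ring
  · rfl

theorem volume_Yex_image_Icc_eq_zero (ε : ℝ) : volume (Yex (2 * √ε) '' Icc (-ε) 0) = 0 := by
  refine measure_mono_null (t := {0, Yex (2 * √ε) 0}) ?_ ((toFinite _).measure_zero _)
  rintro _ ⟨x, ⟨hεx, hx0⟩, rfl⟩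
  rcases hx0.lt_or_eq with hx | rfl
  · exact Or.inl (Yex_eq_zero hx (by gcongr; linarith))
  · exact Or.inr rfl

theorem not_isWeakCompressibilityModulus_Yex (φ : ℝ → ℝ) :
    ¬ IsWeakCompressibilityModulus Yex φ := by
  rintro ⟨-, hφpos, hφ⟩
  have hvol : volume (Yex 1 '' Icc (-(1 / 4)) 0) = 0 := by
    convert volume_Yex_image_Icc_eq_zero (1 / 4)
    rw [show (1 / 4 : ℝ) = (1 / 2) ^ 2 by norm_num, Real.sqrt_sq (by norm_num)]
    norm_num
  have h := hφ (-(1 / 4)) 0 (by norm_num) 1 ⟨zero_le_one, le_rfl⟩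
  rw [hvol] at h
  norm_num at h
  linarith [hφpos (1 / 4) (by norm_num)]

/-- (i) both `X` and `Y` are `C¹` in time on `[0,∞)` and solve
`∂ₜZ = √|Z|`, `Z(0,x) = x`; (ii) `X` satisfies the weak compressibility condition on
`[0,1]` with some continuous modulus `φ` positive on `(0,∞)`; (iii) `Y` fails it:
`|Y(2√ε, [-ε,0])| = 0` for `0 < ε ≤ 1/4`, so no such modulus exists for `Y`. -/
theorem stmt18 :
    (∀ x : ℝ, Xex 0 x = x ∧ Yex 0 x = x ∧
      ∀ t ∈ Set.Ici (0 : ℝ),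
        HasDerivWithinAt (fun s => Xex s x) (Real.sqrt |Xex t x|) (Set.Ici 0) t ∧
        HasDerivWithinAt (fun s => Yex s x) (Real.sqrt |Yex t x|) (Set.Ici 0) t) ∧
    (∃ φ : ℝ → ℝ, ContinuousOn φ (Set.Ici 0) ∧ (∀ ξ > (0 : ℝ), 0 < φ ξ) ∧
      ∀ a c : ℝ, a ≤ c → ∀ t ∈ Set.Icc (0 : ℝ) 1,
        φ (c - a) ≤ (volume (Xex t '' Set.Icc a c)).toReal) ∧
    (∀ ε : ℝ, 0 < ε → ε ≤ 1 / 4 →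
      volume (Yex (2 * Real.sqrt ε) '' Set.Icc (-ε) 0) = 0) ∧
    ¬ ∃ φ : ℝ → ℝ, ContinuousOn φ (Set.Ici 0) ∧ (∀ ξ > (0 : ℝ), 0 < φ ξ) ∧
      ∀ a c : ℝ, a ≤ c → ∀ t ∈ Set.Icc (0 : ℝ) 1,
        φ (c - a) ≤ (volume (Yex t '' Set.Icc a c)).toReal := by
  refine ⟨fun x => ⟨Xex_zero x, Yex_zero x, fun t ht =>
      ⟨hasDerivWithinAt_Xex x ht, hasDerivWithinAt_Yex x ht⟩⟩,
    ⟨_, isWeakCompressibilityModulus_Xex⟩, fun ε _ _ => volume_Yex_image_Icc_eq_zero ε, ?_⟩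
  rintro ⟨φ, hφ⟩
  exact not_isWeakCompressibilityModulus_Yex φ hφ
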